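/- arXiv:2011.05875 — 2 statements merged into one kernel-verified Lean document; each statement's English description precedes it below -/
import Mathlib

section
/- A pair of sequences ((Aₙ),(Ψₙ)) of bounded linear operators from H to H₀ is an orthonormal factorable weak operator-valued frame in B(H,H₀) if and only if there exist bounded linear operators U, V : H → ℓ²(ℕ,H₀) such that Aₙ = Lₙ* U and Ψₙ = Lₙ* V for all n ∈ ℕ, V*U = I_H, and U V* = I on ℓ²(ℕ,H₀). -/
noncomputable section

open ContinuousLinearMap Filter

variable {H H₀ : Type*} [NormedAddCommGroup H] [InnerProductSpace ℂ H] [CompleteSpace H]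
  [NormedAddCommGroup H₀] [InnerProductSpace ℂ H₀] [CompleteSpace H₀]

/-- `ℓ²(I, H₀)`: square-summable `H₀`-valued families indexed by `I`. -/
abbrev l2 (I : Type*) (H₀ : Type*) [NormedAddCommGroup H₀] : Type _ :=
  lp (fun _ : I => H₀) 2

/-- The isometry `Lᵢ : H₀ → ℓ²(I,H₀)` sending `h` to the family equal to `h` at index `i`
and `0` elsewhere. -/
def Lop {I : Type*} [DecidableEq I] (i : I) : H₀ →L[ℂ] l2 I H₀ :=
  LinearMap.mkContinuous
    { toFun := fun h => lp.single 2 i h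
      map_add' := by
        intro a b
        apply lp.ext
        funext j
        by_cases hj : j = i
        · subst hj; simp [lp.single_apply_self]
        · simp [lp.single_apply_ne _ _ _ hj, lp.coeFn_add]
      map_smul' := by
        intro c a
        simp [lp.single_smul] }
    1
    (by
      intro h
      simpa using (lp.norm_single (p := 2) (by norm_num) (fun _ : I => h) i).le)

/-- Convergence of the sequence of partial sums `∑_{n < m} f n` to `x` as `m → ∞`. -/
def SeqSum {E : Type*} [AddCommMonoid E] [TopologicalSpace E] (f : ℕ → E) (x : E) : Prop :=
  Tendsto (fun m => ∑ n ∈ Finset.range m, f n) atTop (nhds x)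

/-!
Writing `Lₙ* x = x n`, the convergence of `∑ₙ Lₙ (Bₙ h)` to `θ h` in `ℓ²(ℕ,H₀)` says exactly
that `Bₙ = Lₙ* θ` for every `n`: coordinates of the limit are limits of coordinates, and every
`x ∈ ℓ²` is the sum of its coordinates. Hence the analysis operators of a factorable weak OVF are
the `U, V` of the factorization, and its frame operator is `∑ₙ V* Lₙ Lₙ* U = V* U`.
-/

omit [CompleteSpace H₀] in
theorem Lop_apply {I : Type*} [DecidableEq I] (i : I) (h : H₀) :
    (Lop i h : l2 I H₀) = lp.single 2 i h :=
  rfl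

theorem adjoint_Lop_apply {I : Type*} [DecidableEq I] (i : I) (x : l2 I H₀) :
    adjoint (Lop i) x = x i :=
  ext_inner_right ℂ fun h => by
    rw [adjoint_inner_left, Lop_apply, lp.inner_single_right]

theorem seqSum_Lop_iff (v : ℕ → H₀) (x : l2 ℕ H₀) :
    SeqSum (fun n => Lop n (v n)) x ↔ ∀ n, v n = x n := by
  constructor
  · intro hx n
    have hcoord : Tendsto (fun m => ∑ k ∈ Finset.range m, (Lop k (v k) : l2 ℕ H₀) n) atTop
        (nhds (x n)) := by
      simpa only [← adjoint_Lop_apply, map_sum, Function.comp_def] using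
        ((adjoint (Lop n)).continuous.tendsto x).comp hx
    refine tendsto_nhds_unique (tendsto_const_nhds.congr' ?_) hcoord
    filter_upwards [eventually_gt_atTop n] with m hm
    simp [Lop_apply, Pi.single_apply, hm]
  · intro hv
    have hx : HasSum (fun n => (Lop n (x n) : l2 ℕ H₀)) x :=
      lp.hasSum_single (E := fun _ : ℕ => H₀) ENNReal.ofNat_ne_top x
    simpa only [SeqSum, hv] using hx.tendsto_sum_nat

omit [CompleteSpace H] in
theorem seqSum_Lop_apply_iff (B : ℕ → H →L[ℂ] H₀) (θ : H →L[ℂ] l2 ℕ H₀) :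
    (∀ h, SeqSum (fun n => Lop n (B n h)) (θ h)) ↔ ∀ n, B n = adjoint (Lop n) ∘L θ := by
  simp only [seqSum_Lop_iff, ContinuousLinearMap.ext_iff, comp_apply, adjoint_Lop_apply]
  exact forall_comm

theorem seqSum_adjoint_apply_of_factor {A Ψ : ℕ → H →L[ℂ] H₀} {U V : H →L[ℂ] l2 ℕ H₀}
    (hA : ∀ n, A n = adjoint (Lop n) ∘L U) (hΨ : ∀ n, Ψ n = adjoint (Lop n) ∘L V) (h : H) :
    SeqSum (fun n => adjoint (Ψ n) (A n h)) ((adjoint V ∘L U) h) := by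
  have hU : SeqSum (fun n => Lop n (A n h)) (U h) := (seqSum_Lop_apply_iff A U).2 hA h
  have hterm : ∀ n, adjoint (Ψ n) (A n h) = adjoint V (Lop n (A n h)) := fun n => by
    rw [hΨ n, adjoint_comp, adjoint_adjoint, comp_apply]
  simpa only [SeqSum, hterm, ← map_sum, comp_apply, Function.comp_def] using
    ((adjoint V).continuous.tendsto (U h)).comp hU

/-- `((Aₙ),(Ψₙ))` is an orthonormal factorable weak OVF iff `Aₙ = Lₙ* U`,
`Ψₙ = Lₙ* V` with `V*U = I_H` and `U V* = I` on `ℓ²(ℕ,H₀)`. -/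
theorem stmt8 (A Ψ : ℕ → H →L[ℂ] H₀) :
    (∃ (θA θΨ : H →L[ℂ] l2 ℕ H₀) (S : H →L[ℂ] H),
        (∀ h : H, SeqSum (fun n => Lop n (A n h)) (θA h)) ∧
        (∀ h : H, SeqSum (fun n => Lop n (Ψ n h)) (θΨ h)) ∧
        (∀ h : H, SeqSum (fun n => adjoint (Ψ n) (A n h)) (S h)) ∧
        S = 1 ∧
        θA ∘L adjoint θΨ = 1) ↔
    (∃ U V : H →L[ℂ] l2 ℕ H₀,
        (∀ n : ℕ, A n = adjoint (Lop n) ∘L U) ∧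
        (∀ n : ℕ, Ψ n = adjoint (Lop n) ∘L V) ∧
        adjoint V ∘L U = 1 ∧
        U ∘L adjoint V = 1) := by
  constructor
  · rintro ⟨θA, θΨ, S, hA, hΨ, hS, rfl, hθ⟩
    rw [seqSum_Lop_apply_iff] at hA hΨ
    refine ⟨θA, θΨ, hA, hΨ, ?_, hθ⟩
    ext h
    exact tendsto_nhds_unique (seqSum_adjoint_apply_of_factor hA hΨ h) (hS h)
  · rintro ⟨U, V, hA, hΨ, hVU, hUV⟩
    refine ⟨U, V, 1, (seqSum_Lop_apply_iff A U).2 hA, (seqSum_Lop_apply_iff Ψ V).2 hΨ,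
      fun h => ?_, rfl, hUV⟩
    simpa only [hVU] using seqSum_adjoint_apply_of_factor hA hΨ h
end
end

section
/- Let ((Aₙ),(Ψₙ)) be a factorable weak operator-valued frame in B(H,H₀) with frame operator S := S_{A,Ψ}. Suppose (Bₙ) is a sequence of bounded operators from H to H₀ such that Σ_{n=1}^∞ ‖Aₙ − Bₙ‖² converges and Σ_{n=1}^∞ ‖Aₙ − Bₙ‖ · ‖Ψₙ (S*)⁻¹‖ < 1. Then ((Bₙ),(Ψₙ)) is a factorable weak OVF in B(H,H₀) with frame bounds (1 − Σ_{n=1}^∞ ‖Aₙ − Bₙ‖ ‖Ψₙ (S*)⁻¹‖) / ‖(S*)⁻¹‖ and ‖θ_Ψ‖ ((Σ_{n=1}^∞ ‖Aₙ − Bₙ‖²)^{1/2} + ‖θ_A‖). -/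
noncomputable section

open ContinuousLinearMap Filter

variable {H H₀ : Type*} [NormedAddCommGroup H] [InnerProductSpace ℂ H] [CompleteSpace H]
  [NormedAddCommGroup H₀] [InnerProductSpace ℂ H₀] [CompleteSpace H₀]

/-!
With `Cₙ = Aₙ - Bₙ`, square-summability of `‖Cₙ‖` makes `h ↦ (Cₙ h)ₙ` a bounded analysis
operator `θ_C` with `‖θ_C‖ ≤ (∑ ‖Cₙ‖²)^{1/2}`, so `θ_B = θ_A - θ_C` and the frame operator of
`((Bₙ),(Ψₙ))` is `θ_Ψ* θ_B = S - D` with `D = θ_Ψ* θ_C`. Since `S⁻¹ Ψₙ* = (Ψₙ (S*)⁻¹)*`, the series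
`S⁻¹ D h = ∑ S⁻¹ Ψₙ* Cₙ h` has norm at most `r ‖h‖`, where `r = ∑ ‖Cₙ‖ ‖Ψₙ (S*)⁻¹‖ < 1`. Hence
`S - D = S (1 - S⁻¹ D)` is invertible by a Neumann series, and `‖S⁻¹‖ ‖(S - D) h‖ ≥ (1 - r) ‖h‖`.
The upper bound is `‖θ_Ψ*‖ ‖θ_B‖ ≤ ‖θ_Ψ‖ (‖θ_C‖ + ‖θ_A‖)`.
-/

namespace SeqSum

theorem unique {E : Type*} [AddCommMonoid E] [TopologicalSpace E] [T2Space E] {f : ℕ → E}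
    {x y : E} (hx : SeqSum f x) (hy : SeqSum f y) : x = y :=
  tendsto_nhds_unique hx hy

theorem sub {E : Type*} [AddCommGroup E] [TopologicalSpace E] [IsTopologicalAddGroup E]
    {f g : ℕ → E} {x y : E} (hf : SeqSum f x) (hg : SeqSum g y) :
    SeqSum (fun n => f n - g n) (x - y) := by
  simpa only [SeqSum, Finset.sum_sub_distrib] using Tendsto.sub hf hg

theorem map {𝕜 E F : Type*} [Semiring 𝕜] [AddCommMonoid E] [TopologicalSpace E] [Module 𝕜 E]
    [AddCommMonoid F] [TopologicalSpace F] [Module 𝕜 F] {f : ℕ → E} {x : E}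
    (L : E →L[𝕜] F) (hf : SeqSum f x) : SeqSum (fun n => L (f n)) (L x) := by
  simpa only [SeqSum, map_sum, Function.comp_def] using (L.continuous.tendsto x).comp hf

theorem norm_le_tsum {E : Type*} [SeminormedAddCommGroup E] {f : ℕ → E} {x : E} {b : ℕ → ℝ}
    (hf : SeqSum f x) (hfb : ∀ n, ‖f n‖ ≤ b n) (hb : Summable b) : ‖x‖ ≤ ∑' n, b n :=
  le_of_tendsto hf.norm <| Eventually.of_forall fun _ =>
    (norm_sum_le _ _).trans <| (Finset.sum_le_sum fun n _ => hfb n).trans <|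
      hb.sum_le_tsum _ fun n _ => (norm_nonneg _).trans (hfb n)

end SeqSum

section AnalysisOperator

variable {𝕜 E F : Type*} [NontriviallyNormedField 𝕜] [NormedAddCommGroup E] [NormedSpace 𝕜 E]
  [NormedAddCommGroup F] [NormedSpace 𝕜 F]

theorem memℓp_two_apply_of_summable_sq_norm (C : ℕ → E →L[𝕜] F)
    (hC : Summable fun n => ‖C n‖ ^ 2) (x : E) : Memℓp (fun n => C n x) 2 := by
  have hnorm : Memℓp (fun n => ‖C n‖) 2 := by
    refine memℓp_gen ?_
    simpa [Real.rpow_two] using hC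
  exact (hnorm.const_mul ‖x‖).mono fun n => by rw [mul_comm]; exact (C n).le_opNorm x

def analysisOperator (C : ℕ → E →L[𝕜] F) (hC : Summable fun n => ‖C n‖ ^ 2) :
    E →L[𝕜] l2 ℕ F :=
  LinearMap.mkContinuous
    { toFun := fun x => ⟨fun n => C n x, memℓp_two_apply_of_summable_sq_norm C hC x⟩
      map_add' := fun x y => lp.ext <| funext fun n => map_add (C n) x y
      map_smul' := fun c x => lp.ext <| funext fun n => map_smul (C n) c x }
    √(∑' n, ‖C n‖ ^ 2)
    (fun x => by
      refine lp.norm_le_of_tsum_le (by norm_num) (by positivity) ?_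
      have hterm : ∀ n, ‖C n x‖ ^ 2 ≤ ‖C n‖ ^ 2 * ‖x‖ ^ 2 := fun n => by
        rw [← mul_pow]; gcongr; exact (C n).le_opNorm x
      have hdom : Summable fun n => ‖C n‖ ^ 2 * ‖x‖ ^ 2 := hC.mul_right _
      simp only [ENNReal.toReal_ofNat, Real.rpow_two, mul_pow,
        Real.sq_sqrt (tsum_nonneg fun n => sq_nonneg ‖C n‖), ← tsum_mul_right]
      exact (hdom.of_nonneg_of_le (fun n => sq_nonneg _) hterm).tsum_le_tsum hterm hdom)

theorem opNorm_analysisOperator_le (C : ℕ → E →L[𝕜] F) (hC : Summable fun n => ‖C n‖ ^ 2) :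
    ‖analysisOperator C hC‖ ≤ √(∑' n, ‖C n‖ ^ 2) :=
  LinearMap.mkContinuous_norm_le _ (Real.sqrt_nonneg _) _

end AnalysisOperator

theorem isUnit_sub_of_norm_mul_lt_one {R : Type*} [NormedRing R] [HasSummableGeomSeries R]
    {S T D : R} (hST : S * T = 1) (hTS : T * S = 1) (hTD : ‖T * D‖ < 1) : IsUnit (S - D) := by
  have hfactor : S - D = S * (1 - T * D) := by rw [mul_sub, mul_one, ← mul_assoc, hST, one_mul]
  rw [hfactor]
  exact (Units.mk S T hST hTS).isUnit.mul (isUnit_one_sub_of_norm_lt_one hTD)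

theorem div_opNorm_mul_norm_le_norm_sub_apply {𝕜 E : Type*} [NontriviallyNormedField 𝕜]
    [NormedAddCommGroup E] [NormedSpace 𝕜 E] {S T D : E →L[𝕜] E} {r : ℝ}
    (hTS : T ∘L S = 1) (hTD : ‖T ∘L D‖ ≤ r) (x : E) : (1 - r) / ‖T‖ * ‖x‖ ≤ ‖(S - D) x‖ := by
  have hinv : T ((S - D) x) = x - (T ∘L D) x := by
    simpa using congrArg (fun U : E →L[𝕜] E => U x - (T ∘L D) x) hTS
  have key : (1 - r) * ‖x‖ ≤ ‖(S - D) x‖ * ‖T‖ := calc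
    (1 - r) * ‖x‖ ≤ ‖x‖ - ‖(T ∘L D) x‖ := by
      nlinarith [(T ∘L D).le_opNorm x, norm_nonneg x]
    _ ≤ ‖T ((S - D) x)‖ := hinv ▸ norm_sub_norm_le _ _
    _ ≤ ‖(S - D) x‖ * ‖T‖ := by rw [mul_comm]; exact T.le_opNorm _
  rcases (norm_nonneg T).eq_or_lt with hT | hT
  · rw [← hT, div_zero, zero_mul]
    exact norm_nonneg _
  · rw [div_mul_eq_mul_div]
    exact div_le_of_le_mul₀ hT.le (norm_nonneg _) key

section Lop

variable {E F : Type*} [NormedAddCommGroup E] [NormedSpace ℂ E]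
  [NormedAddCommGroup F] [InnerProductSpace ℂ F]

theorem Lop_apply_s19 (i : ℕ) (x : F) : (Lop i x : l2 ℕ F) = lp.single 2 i x :=
  rfl

theorem seqSum_Lop_analysisOperator (C : ℕ → E →L[ℂ] F) (hC : Summable fun n => ‖C n‖ ^ 2)
    (x : E) : SeqSum (fun n => Lop n (C n x)) (analysisOperator C hC x) :=
  (lp.hasSum_single (by norm_num) (analysisOperator C hC x)).tendsto_sum_nat

theorem coeFn_eq_of_seqSum_Lop {g : ℕ → F} {f : l2 ℕ F} (hf : SeqSum (fun k => Lop k (g k)) f) :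
    ⇑f = g := by
  funext n
  have hcoord : Tendsto (fun m => (∑ k ∈ Finset.range m, Lop k (g k) : l2 ℕ F) n) atTop
      (nhds (f n)) :=
    ((lp.lipschitzWith_one_eval 2 n).continuous.tendsto f).comp hf
  refine tendsto_nhds_unique hcoord (tendsto_const_nhds.congr' ?_)
  filter_upwards [eventually_gt_atTop n] with m hm
  rw [lp.coeFn_sum, Finset.sum_apply]
  simp [Lop_apply_s19, lp.single_apply, Pi.single_apply, hm]

end Lop

theorem adjoint_apply_Lop {Ψ : ℕ → H →L[ℂ] H₀} {θ : H →L[ℂ] l2 ℕ H₀}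
    (hθ : ∀ h, SeqSum (fun n => Lop n (Ψ n h)) (θ h)) (n : ℕ) (x : H₀) :
    adjoint θ (Lop n x) = adjoint (Ψ n) x :=
  ext_inner_right ℂ fun h => by
    rw [adjoint_inner_left, adjoint_inner_left, Lop_apply_s19, lp.inner_single_left,
      coeFn_eq_of_seqSum_Lop (hθ h)]

theorem seqSum_adjoint_comp_apply {Ψ X : ℕ → H →L[ℂ] H₀} {θΨ θX : H →L[ℂ] l2 ℕ H₀}
    (hθΨ : ∀ h, SeqSum (fun n => Lop n (Ψ n h)) (θΨ h))
    (hθX : ∀ h, SeqSum (fun n => Lop n (X n h)) (θX h)) (h : H) :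
    SeqSum (fun n => adjoint (Ψ n) (X n h)) ((adjoint θΨ ∘L θX) h) := by
  simpa only [comp_apply, adjoint_apply_Lop hθΨ] using (hθX h).map (adjoint θΨ)

theorem opNorm_comp_le_tsum {Ψ C : ℕ → H →L[ℂ] H₀} {T D : H →L[ℂ] H}
    (hD : ∀ h, SeqSum (fun n => adjoint (Ψ n) (C n h)) (D h))
    (hsum : Summable fun n => ‖C n‖ * ‖Ψ n ∘L adjoint T‖) :
    ‖T ∘L D‖ ≤ ∑' n, ‖C n‖ * ‖Ψ n ∘L adjoint T‖ := by
  refine opNorm_le_bound _ (tsum_nonneg fun n => by positivity) fun h => ?_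
  have hterm : ∀ n, ‖T (adjoint (Ψ n) (C n h))‖ ≤ ‖C n‖ * ‖Ψ n ∘L adjoint T‖ * ‖h‖ := fun n => calc
    ‖T (adjoint (Ψ n) (C n h))‖ = ‖adjoint (Ψ n ∘L adjoint T) (C n h)‖ := by
      rw [adjoint_comp, adjoint_adjoint, comp_apply]
    _ ≤ ‖adjoint (Ψ n ∘L adjoint T)‖ * (‖C n‖ * ‖h‖) := le_opNorm_of_le _ ((C n).le_opNorm h)
    _ = ‖C n‖ * ‖Ψ n ∘L adjoint T‖ * ‖h‖ := by rw [adjoint.norm_map]; ring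
  rw [← tsum_mul_right]
  exact ((hD h).map T).norm_le_tsum hterm (hsum.mul_right _)

/-- Quadratic perturbation of a factorable weak OVF `((Aₙ),(Ψₙ))` (frame
operator `S`, inverse `T`): if `Σ ‖Aₙ − Bₙ‖²` converges and
`Σ ‖Aₙ − Bₙ‖ ‖Ψₙ (S*)⁻¹‖ < 1`, then `((Bₙ),(Ψₙ))` is a factorable weak OVF with the
stated frame bounds. -/
theorem stmt19
    (A Ψ : ℕ → H →L[ℂ] H₀) (S T : H →L[ℂ] H)
    (hS : ∀ h : H, SeqSum (fun n => adjoint (Ψ n) (A n h)) (S h))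
    (hST : S ∘L T = 1) (hTS : T ∘L S = 1)
    (θA θΨ : H →L[ℂ] l2 ℕ H₀)
    (hθA : ∀ h : H, SeqSum (fun n => Lop n (A n h)) (θA h))
    (hθΨ : ∀ h : H, SeqSum (fun n => Lop n (Ψ n h)) (θΨ h))
    (B : ℕ → H →L[ℂ] H₀)
    (hsq : Summable fun n => ‖A n - B n‖ ^ 2)
    (hsum : Summable fun n => ‖A n - B n‖ * ‖Ψ n ∘L adjoint T‖)
    (hlt : (∑' n : ℕ, ‖A n - B n‖ * ‖Ψ n ∘L adjoint T‖) < 1) :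
    ∃ (θB : H →L[ℂ] l2 ℕ H₀) (S' : H →L[ℂ] H),
      (∀ h : H, SeqSum (fun n => Lop n (B n h)) (θB h)) ∧
      (∀ h : H, SeqSum (fun n => adjoint (Ψ n) (B n h)) (S' h)) ∧
      IsUnit S' ∧
      (∀ h : H,
        (1 - ∑' n : ℕ, ‖A n - B n‖ * ‖Ψ n ∘L adjoint T‖) / ‖adjoint T‖ * ‖h‖ ≤ ‖S' h‖ ∧
        ‖S' h‖ ≤ ‖θΨ‖ * (Real.sqrt (∑' n : ℕ, ‖A n - B n‖ ^ 2) + ‖θA‖) * ‖h‖) := by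
  set θC := analysisOperator (fun n => A n - B n) hsq
  have hθC := seqSum_Lop_analysisOperator (fun n => A n - B n) hsq
  have hθB : ∀ h, SeqSum (fun n => Lop n (B n h)) ((θA - θC) h) := fun h => by
    simpa only [← map_sub, sub_apply, sub_sub_cancel] using (hθA h).sub (hθC h)
  have hS_eq : S = adjoint θΨ ∘L θA :=
    ext fun h => (hS h).unique (seqSum_adjoint_comp_apply hθΨ hθA h)
  have hS' : adjoint θΨ ∘L (θA - θC) = S - adjoint θΨ ∘L θC := by rw [hS_eq, comp_sub]
  have hTD := opNorm_comp_le_tsum (seqSum_adjoint_comp_apply hθΨ hθC) hsum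
  refine ⟨θA - θC, adjoint θΨ ∘L (θA - θC), hθB, seqSum_adjoint_comp_apply hθΨ hθB, ?_,
    fun h => ⟨?_, ?_⟩⟩
  · rw [hS']
    exact isUnit_sub_of_norm_mul_lt_one hST hTS (hTD.trans_lt hlt)
  · rw [hS', adjoint.norm_map]
    exact div_opNorm_mul_norm_le_norm_sub_apply hTS hTD h
  · refine (le_opNorm _ h).trans (mul_le_mul_of_nonneg_right ?_ (norm_nonneg h))
    calc ‖adjoint θΨ ∘L (θA - θC)‖ ≤ ‖θΨ‖ * ‖θA - θC‖ := by
          simpa only [adjoint.norm_map] using opNorm_comp_le (adjoint θΨ) (θA - θC)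
      _ ≤ ‖θΨ‖ * (√(∑' n, ‖A n - B n‖ ^ 2) + ‖θA‖) := by
          gcongr
          linarith [norm_sub_le θA θC, opNorm_analysisOperator_le _ hsq]
end
end
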